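/- Let G be a unicyclic graph. Then every metric generator S of G is a branch-resolving set of G with |A(S)| ≥ 2, and every edge metric generator S of G is a branch-resolving set of G with |A(S)| ≥ 2. -/

import Mathlib

open SimpleGraph

namespace Paper

variable {V : Type} [Fintype V] [DecidableEq V]

/-- The edges of the cycle `a_0 a_1 ⋯ a_{ℓ-1} a_0`. -/
def cycEdges {ℓ : ℕ} (a : ZMod ℓ → V) : Set (Sym2 V) :=
  {e | ∃ i : ZMod ℓ, e = s(a i, a (i + 1))}

/-- `G` is a unicyclic graph whose unique cycle is `a_0 a_1 ⋯ a_{ℓ-1} a_0`: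
`G` is connected, `a` is an injective cyclic labeling of length `ℓ ≥ 3` whose
consecutive vertices are adjacent, and deleting the cycle edges leaves a forest. -/
structure UnicyclicSetup (G : SimpleGraph V) (ℓ : ℕ) (a : ZMod ℓ → V) : Prop where
  conn : G.Connected
  three_le : 3 ≤ ℓ
  inj : Function.Injective a
  adj : ∀ i : ZMod ℓ, G.Adj (a i) (a (i + 1))
  isForest : (G.deleteEdges (cycEdges a)).IsAcyclic

/-- The forest `G - E(C)`. -/
def forest (G : SimpleGraph V) {ℓ : ℕ} (a : ZMod ℓ → V) : SimpleGraph V :=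
  G.deleteEdges (cycEdges a)

/-- `v` lies in `T_{a_i}`, the component of `G - E(C)` containing `a_i`. -/
def inTree (G : SimpleGraph V) {ℓ : ℕ} (a : ZMod ℓ → V) (i : ZMod ℓ) (v : V) : Prop :=
  (forest G a).Reachable (a i) v

/-- The vertex set of `T_{a_i}`. -/
def treeVerts (G : SimpleGraph V) {ℓ : ℕ} (a : ZMod ℓ → V) (i : ZMod ℓ) : Set V :=
  {v | inTree G a i v}

/-- The edge set of `T_{a_i}`. -/
def treeEdges (G : SimpleGraph V) {ℓ : ℕ} (a : ZMod ℓ → V) (i : ZMod ℓ) : Set (Sym2 V) :=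
  {e | e ∈ (forest G a).edgeSet ∧ ∀ v ∈ e, inTree G a i v}

/-- The length of `T_{a_i}` (number of vertices minus one). -/
noncomputable def treeLen (G : SimpleGraph V) {ℓ : ℕ} (a : ZMod ℓ → V) (i : ZMod ℓ) : ℕ :=
  (treeVerts G a i).ncard - 1

/-- The cycle vertex `a_i` is `S`-active: `T_{a_i}` contains a vertex of `S`. -/
def sActive (G : SimpleGraph V) {ℓ : ℕ} (a : ZMod ℓ → V) (S : Set V) (i : ZMod ℓ) : Prop :=
  ∃ x ∈ S, inTree G a i x

/-- `A(S)`, the set of `S`-active vertices. -/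
def activeSet (G : SimpleGraph V) {ℓ : ℕ} (a : ZMod ℓ → V) (S : Set V) : Set V :=
  {v | ∃ i : ZMod ℓ, v = a i ∧ sActive G a S i}

/-- `p = [v₁, …, v_k]` is a thread attached to `v` (`v` has degree ≥ 3, `v₁` is adjacent
to `v`, the internal vertices have degree 2, and the last vertex has degree 1). -/
def IsThread (G : SimpleGraph V) [DecidableRel G.Adj] (v : V) (p : List V) : Prop :=
  3 ≤ G.degree v ∧ p ≠ [] ∧ List.Chain G.Adj v p ∧ (v :: p).Nodup ∧
    (∀ u ∈ p.dropLast, G.degree u = 2) ∧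
    (∀ u ∈ p.getLast?, G.degree u = 1)

/-- `S(v)`, the set of all threads attached to `v`. -/
def threads (G : SimpleGraph V) [DecidableRel G.Adj] (v : V) : Set (List V) :=
  {p | IsThread G v p}

/-- `|S(v)|`, the number of threads attached to `v`. -/
noncomputable def numThreads (G : SimpleGraph V) [DecidableRel G.Adj] (v : V) : ℕ :=
  (threads G v).ncard

/-- `S` is a branch-resolving set of `G`: for every vertex `v` of degree at least 3,
at least `|S(v)| - 1` of the threads attached to `v` contain a vertex of `S`. -/
def BranchResolving (G : SimpleGraph V) [DecidableRel G.Adj] (S : Set V) : Prop :=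
  ∀ v : V, 3 ≤ G.degree v →
    numThreads G v - 1 ≤ {p ∈ threads G v | ∃ x ∈ S, x ∈ p}.ncard

/-- `L(G) = Σ_{v, |S(v)| > 1} (|S(v)| - 1)`. -/
noncomputable def Lval (G : SimpleGraph V) [DecidableRel G.Adj] : ℕ :=
  ∑ v : V, (numThreads G v - 1)

/-- `S ∈ B(G)`: a minimum branch-resolving set of `G` consisting only of degree-1 vertices. -/
def inB (G : SimpleGraph V) [DecidableRel G.Adj] (S : Set V) : Prop :=
  BranchResolving G S ∧ (∀ S' : Set V, BranchResolving G S' → S.ncard ≤ S'.ncard) ∧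
    ∀ x ∈ S, G.degree x = 1

/-- `S` is a metric generator of `G`. -/
def MetricGen (G : SimpleGraph V) (S : Set V) : Prop :=
  ∀ u u' : V, u ≠ u' → ∃ w ∈ S, G.dist w u ≠ G.dist w u'

/-- The distance from a vertex `w` to an edge `e`: the minimum distance to an endpoint. -/
noncomputable def edist (G : SimpleGraph V) (w : V) (e : Sym2 V) : ℕ :=
  Sym2.lift ⟨fun x y => min (G.dist w x) (G.dist w y), fun _ _ => min_comm _ _⟩ e

/-- `S` is an edge metric generator of `G`. -/
def EdgeMetricGen (G : SimpleGraph V) (S : Set V) : Prop :=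
  ∀ e ∈ G.edgeSet, ∀ e' ∈ G.edgeSet, e ≠ e' → ∃ w ∈ S, edist G w e ≠ edist G w e'

/-- `dim(G)`, the metric dimension of `G`. -/
noncomputable def metricDim (G : SimpleGraph V) : ℕ :=
  sInf {n | ∃ S : Set V, MetricGen G S ∧ S.ncard = n}

/-- `edim(G)`, the edge metric dimension of `G`. -/
noncomputable def edgeMetricDim (G : SimpleGraph V) : ℕ :=
  sInf {n | ∃ S : Set V, EdgeMetricGen G S ∧ S.ncard = n}

/-- `v` is a bad vertex: a cycle vertex of degree ≥ 4 with a thread attached to it. -/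
def BadVertex (G : SimpleGraph V) [DecidableRel G.Adj] {ℓ : ℕ} (a : ZMod ℓ → V) (v : V) : Prop :=
  v ∈ Set.range a ∧ 4 ≤ G.degree v ∧ ∃ p : List V, IsThread G v p

/-- `v` is a branching vertex of `G`. -/
def BranchingVertex (G : SimpleGraph V) [DecidableRel G.Adj] {ℓ : ℕ} (a : ZMod ℓ → V) (v : V) :
    Prop :=
  (v ∈ Set.range a ∧ 4 ≤ G.degree v) ∨ (v ∉ Set.range a ∧ 3 ≤ G.degree v)

/-- `T_{a_i}` contains no branching vertex. -/
def NoBranching (G : SimpleGraph V) [DecidableRel G.Adj] {ℓ : ℕ} (a : ZMod ℓ → V) (i : ZMod ℓ) :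
    Prop :=
  ∀ v ∈ treeVerts G a i, ¬ BranchingVertex G a v

/-- There exist three `S`-active vertices forming a geodesic triple. -/
def GeoTriple (G : SimpleGraph V) (ℓ : ℕ) (a : ZMod ℓ → V) (S : Set V) : Prop :=
  ∃ p q r : ZMod ℓ, sActive G a S p ∧ sActive G a S q ∧ sActive G a S r ∧
    p ≠ q ∧ q ≠ r ∧ p ≠ r ∧
    G.dist (a p) (a q) + G.dist (a q) (a r) + G.dist (a r) (a p) = ℓ

/-- Condition (i): neither `a_0` nor `a_j` is a bad vertex. -/
def CondI (G : SimpleGraph V) [DecidableRel G.Adj] {ℓ : ℕ} (a : ZMod ℓ → V) (j : ℕ) : Prop :=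
  ¬ BadVertex G a (a 0) ∧ ¬ BadVertex G a (a (j : ZMod ℓ))

/-- Condition (ii) (for `O(ℓ,j)` and `E(ℓ,j)`). -/
def CondII (G : SimpleGraph V) (ℓ : ℕ) (a : ZMod ℓ → V) (j : ℕ) : Prop :=
  j < (ℓ - 2) / 2 →
    ∀ k : ℕ, ((ℓ - ((ℓ - 2) / 2 - j) ≤ k ∧ k ≤ ℓ - 1) ∨
        (j + 1 ≤ k ∧ k ≤ j + ((ℓ - 2) / 2 - j))) →
      treeVerts G a (k : ZMod ℓ) = {a (k : ZMod ℓ)}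

/-- Condition (iii) (for `E(ℓ,j)`). -/
def CondIII (G : SimpleGraph V) [DecidableRel G.Adj] (ℓ : ℕ) (a : ZMod ℓ → V) (j : ℕ) : Prop :=
  1 < j → (∀ k : ℕ, 1 ≤ k → k ≤ j - 1 → NoBranching G a (k : ZMod ℓ)) →
    ∀ k : ℕ, 1 ≤ k → k ≤ j - 1 → treeLen G a (k : ZMod ℓ) ≤ (ℓ - 2) / 2 - j

/-- `G` is an odd-`(ℓ,j)` graph, i.e. `G ∈ O(ℓ,j)`. -/
def OddClass (G : SimpleGraph V) [DecidableRel G.Adj] (ℓ : ℕ) (a : ZMod ℓ → V) (j : ℕ) : Prop :=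
  Odd ℓ ∧ (j = (ℓ - 1) / 2 ∨ (CondI G a j ∧ CondII G ℓ a j))

/-- `G` is an even-`(ℓ,j)` graph, i.e. `G ∈ E(ℓ,j)`. -/
def EvenClass (G : SimpleGraph V) [DecidableRel G.Adj] (ℓ : ℕ) (a : ZMod ℓ → V) (j : ℕ) : Prop :=
  Even ℓ ∧ CondI G a j ∧ CondII G ℓ a j ∧ CondIII G ℓ a j

/-- Condition (ii') (for `O_e(ℓ,j)` and `E_e(ℓ,j)`). -/
def CondII' (G : SimpleGraph V) (ℓ : ℕ) (a : ZMod ℓ → V) (j : ℕ) : Prop :=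
  j < (ℓ - 1) / 2 →
    ∀ k : ℕ, ((ℓ - ((ℓ - 1) / 2 - j) ≤ k ∧ k ≤ ℓ - 1) ∨
        (j + 1 ≤ k ∧ k ≤ j + ((ℓ - 1) / 2 - j))) →
      treeVerts G a (k : ZMod ℓ) = {a (k : ZMod ℓ)}

/-- Condition (iii') (for `O_e(ℓ,j)`). -/
def CondIII' (G : SimpleGraph V) [DecidableRel G.Adj] (ℓ : ℕ) (a : ZMod ℓ → V) (j : ℕ) : Prop :=
  1 < j → (∀ k : ℕ, 1 ≤ k → k ≤ j - 1 → NoBranching G a (k : ZMod ℓ)) →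
    ∀ k : ℕ, 1 ≤ k → k ≤ j - 1 → treeLen G a (k : ZMod ℓ) ≤ (ℓ - 1) / 2 - j

/-- Condition (iv') (for `E_e(ℓ,j)`). -/
def CondIV' (G : SimpleGraph V) [DecidableRel G.Adj] (ℓ : ℕ) (a : ZMod ℓ → V) (j : ℕ) : Prop :=
  1 < j →
    (∀ k : ℕ, 1 ≤ k → k ≤ j - 1 →
      NoBranching G a (k : ZMod ℓ) ∧ NoBranching G a ((ℓ / 2 + j - k : ℕ) : ZMod ℓ)) →
    ∀ k : ℕ, 1 ≤ k → k ≤ j - 1 →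
      1 < (treeVerts G a ((ℓ / 2 + j - k : ℕ) : ZMod ℓ)).ncard →
      treeLen G a (k : ZMod ℓ) ≤ ℓ / 2 - j

/-- `G` is an edge-odd-`(ℓ,j)` graph, i.e. `G ∈ O_e(ℓ,j)`. -/
def OddEClass (G : SimpleGraph V) [DecidableRel G.Adj] (ℓ : ℕ) (a : ZMod ℓ → V) (j : ℕ) : Prop :=
  Odd ℓ ∧ CondI G a j ∧ CondII' G ℓ a j ∧ CondIII' G ℓ a j

/-- `G` is an edge-even-`(ℓ,j)` graph, i.e. `G ∈ E_e(ℓ,j)`. -/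
def EvenEClass (G : SimpleGraph V) [DecidableRel G.Adj] (ℓ : ℕ) (a : ZMod ℓ → V) (j : ℕ) : Prop :=
  Even ℓ ∧ CondI G a j ∧ CondII' G ℓ a j ∧ CondIV' G ℓ a j

/-- `b` is a cyclic labeling of a cycle in `G`. -/
def IsCycleLabeling (G : SimpleGraph V) (ℓ : ℕ) (b : ZMod ℓ → V) : Prop :=
  Function.Injective b ∧ ∀ i : ZMod ℓ, G.Adj (b i) (b (i + 1))

/-- The maximum index `i < ℓ` such that `b_i` is `S`-active. -/
noncomputable def lastActive (G : SimpleGraph V) (ℓ : ℕ) (b : ZMod ℓ → V) (S : Set V) : ℕ :=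
  sSup {n : ℕ | n < ℓ ∧ sActive G b S (n : ZMod ℓ)}

/-- The labeling `a` of the cycle is normal with respect to `S`:
`a_0` is `S`-active and the maximum `S`-active index is as small as possible
over all labelings of the cycle. -/
def NormalLabeling (G : SimpleGraph V) (ℓ : ℕ) (a : ZMod ℓ → V) (S : Set V) : Prop :=
  sActive G a S 0 ∧
    ∀ b : ZMod ℓ → V, IsCycleLabeling G ℓ b → Set.range b = Set.range a →
      lastActive G ℓ a S ≤ lastActive G ℓ b S

end Paper

namespace Paper
set_option linter.unusedSectionVars false

variable {V : Type} [Fintype V] [DecidableEq V]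

lemma walk_pot {G : SimpleGraph V} (φ : V → ℕ) (hstep : ∀ x y, G.Adj x y → φ x ≤ φ y + 1) :
    ∀ {x y : V} (W : G.Walk x y), φ x ≤ W.length + φ y := by
  intro x y W
  induction W with
  | nil => simp
  | cons h W ih =>
    have := hstep _ _ h
    simp only [SimpleGraph.Walk.length_cons]
    omega

lemma dist_adj_le {G : SimpleGraph V} (hc : G.Connected) {x y z : V} (h : G.Adj x y) :
    G.dist x z ≤ G.dist y z + 1 := by
  have t := hc.dist_triangle (u := x) (v := y) (w := z)
  have : G.dist x y ≤ 1 := by simpa using SimpleGraph.dist_le h.toWalk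
  omega

lemma nbr_eq_single {G : SimpleGraph V} [DecidableRel G.Adj] {x w : V}
    (h1 : G.degree x = 1) (hadj : G.Adj w x) : G.neighborFinset x = {w} :=
  (Finset.eq_of_subset_of_card_le (by simpa using hadj.symm)
    (by rw [SimpleGraph.card_neighborFinset_eq_degree, h1, Finset.card_singleton])).symm

lemma nbr_eq_pair {G : SimpleGraph V} [DecidableRel G.Adj] {x w w' : V}
    (h2 : G.degree x = 2) (hadj : G.Adj w x) (hadj' : G.Adj w' x)
    (hne : w ≠ w') : G.neighborFinset x = {w, w'} := by
  refine (Finset.eq_of_subset_of_card_le ?_ ?_).symm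
  · intro z hz
    simp only [Finset.mem_insert, Finset.mem_singleton] at hz
    rcases hz with rfl | rfl
    · simpa using hadj.symm
    · simpa using hadj'.symm
  · rw [SimpleGraph.card_neighborFinset_eq_degree, h2, Finset.card_pair hne]

lemma chain_get_aux {α : Type*} {R : α → α → Prop} {a : α} {l : List α} :
    List.Chain R a l ↔ (∀ h : 0 < l.length, R a (l.get ⟨0, h⟩)) ∧
      ∀ (i : ℕ) (h : i < l.length - 1), R (l.get ⟨i, by omega⟩) (l.get ⟨i + 1, by omega⟩) := by
  unfold List.Chain
  rw [List.isChain_iff_getElem]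
  constructor
  · intro h
    exact ⟨fun h0 => h 0 (by simp; omega), fun i hi => h (i + 1) (by simp; omega)⟩
  · rintro ⟨h0, h1⟩ i hi
    rcases i with _ | i
    · exact h0 (by simp at hi; omega)
    · exact h1 i (by simp at hi; omega)

lemma thread_nbr {G : SimpleGraph V} [DecidableRel G.Adj] {v : V} {p : List V}
    (hp : IsThread G v p) {x z : V} (hx : x ∈ p) (hadj : G.Adj x z) :
    (z ∈ p ∧ (p.idxOf z = p.idxOf x + 1 ∨ p.idxOf z + 1 = p.idxOf x)) ∨
      (z = v ∧ p.idxOf x = 0) := by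
  obtain ⟨hdeg, hne, hchain, hnodup, hmid, hlast⟩ := hp
  have hnodp : p.Nodup := hnodup.of_cons
  have hvp : v ∉ p := (List.nodup_cons.mp hnodup).1
  obtain ⟨h0, hstep⟩ := chain_get_aux.mp hchain
  simp only [List.get_eq_getElem] at h0 hstep
  obtain ⟨m, hmdef⟩ : ∃ m, p.idxOf x = m := ⟨_, rfl⟩
  have hml : m < p.length := hmdef ▸ List.idxOf_lt_length_iff.mpr hx
  have hxm' : ∀ (j : ℕ) (hj : j < p.length), j = m → p[j] = x := by
    intro j hj e
    subst e; subst hmdef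
    exact List.getElem_idxOf hj
  have hzmem : z ∈ G.neighborFinset x := by simpa using hadj
  rw [hmdef]
  by_cases hlastc : m = p.length - 1
  · have hdeg1 : G.degree x = 1 := by
      apply hlast
      rw [List.getLast?_eq_getLast_of_ne_nil hne, Option.mem_some_iff, List.getLast_eq_getElem]
      exact hxm' (p.length - 1) (by omega) (by omega)
    rcases Nat.eq_zero_or_pos m with hm0 | hmpos
    · have hadj0 : G.Adj v x := by
        have := h0 (by omega)
        rwa [hxm' 0 (by omega) (by omega)] at this
      rw [nbr_eq_single hdeg1 hadj0, Finset.mem_singleton] at hzmem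
      exact Or.inr ⟨hzmem, hm0⟩
    · obtain ⟨m', rfl⟩ : ∃ m', m = m' + 1 := ⟨m - 1, by omega⟩
      have hadjl : G.Adj p[m'] x := by
        have := hstep m' (by omega)
        rwa [hxm' (m' + 1) (by omega) rfl] at this
      rw [nbr_eq_single hdeg1 hadjl, Finset.mem_singleton] at hzmem
      subst hzmem
      exact Or.inl ⟨List.getElem_mem _, Or.inr (by rw [List.Nodup.idxOf_getElem hnodp])⟩
  · have hml' : m < p.length - 1 := by omega
    have hdrop : x ∈ p.dropLast := by
      have h1 : m < p.dropLast.length := by rw [List.length_dropLast]; omega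
      have h2 := List.getElem_dropLast h1
      rw [hxm' m (by omega) rfl] at h2
      rw [← h2]
      exact List.getElem_mem _
    have hdeg2 : G.degree x = 2 := hmid x hdrop
    have hadjr : G.Adj x p[m + 1] := by
      have := hstep m hml'
      rwa [hxm' m (by omega) rfl] at this
    rcases Nat.eq_zero_or_pos m with hm0 | hmpos
    · have hadj0 : G.Adj v x := by
        have := h0 (by omega)
        rwa [hxm' 0 (by omega) (by omega)] at this
      have hlr : v ≠ p[m + 1] := fun h => hvp (h ▸ List.getElem_mem _)
      rw [nbr_eq_pair hdeg2 hadj0 hadjr.symm hlr, Finset.mem_insert, Finset.mem_singleton]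
        at hzmem
      rcases hzmem with rfl | rfl
      · exact Or.inr ⟨rfl, hm0⟩
      · exact Or.inl ⟨List.getElem_mem _, Or.inl (by rw [List.Nodup.idxOf_getElem hnodp])⟩
    · obtain ⟨m', rfl⟩ : ∃ m', m = m' + 1 := ⟨m - 1, by omega⟩
      have hadjl : G.Adj p[m'] x := by
        have := hstep m' (by omega)
        rwa [hxm' (m' + 1) (by omega) rfl] at this
      have hlr : p[m'] ≠ p[m' + 1 + 1] := by
        intro h
        have := hnodp.getElem_inj_iff.mp h
        omega
      rw [nbr_eq_pair hdeg2 hadjl hadjr.symm hlr, Finset.mem_insert, Finset.mem_singleton]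
        at hzmem
      rcases hzmem with rfl | rfl
      · exact Or.inl ⟨List.getElem_mem _, Or.inr (by rw [List.Nodup.idxOf_getElem hnodp])⟩
      · exact Or.inl ⟨List.getElem_mem _, Or.inl (by rw [List.Nodup.idxOf_getElem hnodp])⟩

lemma thread_head_adj {G : SimpleGraph V} [DecidableRel G.Adj] {v : V} {p : List V}
    (hp : IsThread G v p) : G.Adj v (p.head hp.2.1) := by
  obtain ⟨-, hne, hchain, -⟩ := hp
  cases p with
  | nil => exact absurd rfl hne
  | cons a t => exact (List.chain_cons.mp hchain).1

lemma thread_dist {G : SimpleGraph V} [DecidableRel G.Adj] (hc : G.Connected)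
    {v : V} {p : List V} (hp : IsThread G v p)
    {w : V} (hw : w ∉ p) : G.dist w (p.head hp.2.1) = G.dist w v + 1 := by
  classical
  set φ : V → ℕ := fun x => if x ∈ p then p.idxOf x else G.dist x v + 1 with hφ
  have hvp : v ∉ p := (List.nodup_cons.mp hp.2.2.2.1).1
  have hstep : ∀ x y, G.Adj x y → φ x ≤ φ y + 1 := by
    intro x y h
    by_cases hy : y ∈ p
    · rcases thread_nbr hp hy h.symm with ⟨hxp, hidx⟩ | ⟨rfl, hy0⟩
      · simp only [hφ, if_pos hxp, if_pos hy]
        omega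
      · simp only [hφ, if_neg hvp, if_pos hy, hy0, SimpleGraph.dist_self]
        omega
    · by_cases hx : x ∈ p
      · rcases thread_nbr hp hx h with ⟨hyp, -⟩ | ⟨-, hx0⟩
        · exact absurd hyp hy
        · simp only [hφ, if_pos hx, hx0]
          omega
      · simp only [hφ, if_neg hx, if_neg hy]
        have := dist_adj_le hc (z := v) h
        omega
  have hhead : p.head hp.2.1 ∈ p := List.head_mem _
  have hφh : φ (p.head hp.2.1) = 0 := by
    have h0 : 0 < p.length := List.length_pos_iff.mpr hp.2.1
    have : p.head hp.2.1 = p[0] := (List.getElem_zero h0).symm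
    simp only [hφ, this]
    simp [List.getElem_mem, List.Nodup.idxOf_getElem hp.2.2.2.1.of_cons]
  have hφw : φ w = G.dist w v + 1 := by simp [hφ, if_neg hw]
  apply le_antisymm
  · have t := hc.dist_triangle (u := w) (v := v) (w := p.head hp.2.1)
    have : G.dist v (p.head hp.2.1) ≤ 1 := by
      simpa using SimpleGraph.dist_le (thread_head_adj hp).toWalk
    omega
  · obtain ⟨W, hW⟩ := (hc w (p.head hp.2.1)).exists_walk_length_eq_dist
    have := walk_pot φ hstep W
    omega

lemma getElem_of_indexOf {l : List V} {x : V} {j : ℕ} (hj : j < l.length)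
    (e : List.idxOf x l = j) : l[j] = x := by
  cases e
  exact List.getElem_idxOf hj

lemma mem_dropLast_of {l : List V} {i : ℕ} (h : i < l.length) (hi : i < l.length - 1) :
    l[i] ∈ l.dropLast := by
  have h1 : i < l.dropLast.length := by rw [List.length_dropLast]; omega
  have h2 := List.getElem_dropLast h1
  rw [← h2]
  exact List.getElem_mem _

lemma thread_len_le {G : SimpleGraph V} [DecidableRel G.Adj] {v : V} {p q : List V}
    (hp : IsThread G v p) (hq : IsThread G v q)
    (key : ∀ m (hm : m < p.length) (hm' : m < q.length), p[m] = q[m]) :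
    p.length ≤ q.length := by
  by_contra hlt
  push_neg at hlt
  have hq0 : 0 < q.length := List.length_pos_iff.mpr hq.2.1
  have e : p[q.length - 1]'(by omega) = q[q.length - 1]'(by omega) :=
    key _ (by omega) (by omega)
  have hdeg1 : G.degree (q[q.length - 1]'(by omega)) = 1 := by
    apply hq.2.2.2.2.2
    rw [List.getLast?_eq_getLast_of_ne_nil hq.2.1, Option.mem_some_iff, List.getLast_eq_getElem]
  have hdeg2 : G.degree (p[q.length - 1]'(by omega)) = 2 :=
    hp.2.2.2.2.1 _ (mem_dropLast_of (by omega) (by omega))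
  rw [e, hdeg1] at hdeg2
  exact absurd hdeg2 (by norm_num)

lemma thread_head_det {G : SimpleGraph V} [DecidableRel G.Adj] {v : V} {p q : List V}
    (hp : IsThread G v p) (hq : IsThread G v q)
    (h : p.head hp.2.1 = q.head hq.2.1) : p = q := by
  have hnodp : p.Nodup := hp.2.2.2.1.of_cons
  have hnodq : q.Nodup := hq.2.2.2.1.of_cons
  have hvp : v ∉ p := (List.nodup_cons.mp hp.2.2.2.1).1
  obtain ⟨hstep, _⟩ := And.intro (chain_get_aux.mp hp.2.2.1).2 trivial
  simp only [List.get_eq_getElem] at hstep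
  have key : ∀ m (hm : m < p.length) (hm' : m < q.length), p[m] = q[m] := by
    intro m
    induction m using Nat.strong_induction_on with
    | _ m ih =>
      intro hm hm'
      match m with
      | 0 =>
        rw [List.getElem_zero, List.getElem_zero]
        exact h
      | (m + 1) =>
        have e : p[m] = q[m] := ih m (by omega) (by omega) (by omega)
        have hadj : G.Adj q[m] (p[m + 1]) := by
          have := hstep m (by omega)
          rwa [e] at this
        rcases thread_nbr hq (List.getElem_mem _) hadj with ⟨hin, hidx⟩ | ⟨hv, -⟩
        · have him : List.idxOf (q[m]'(by omega)) q = m := List.Nodup.idxOf_getElem hnodq m _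
          rw [him] at hidx
          rcases hidx with h1 | h2
          · exact (getElem_of_indexOf hm' h1).symm
          · rcases Nat.eq_zero_or_pos m with rfl | hmpos
            · omega
            · have e2 : q[m - 1]'(by omega) = p[m + 1] := getElem_of_indexOf (by omega) (by omega)
              have e3 : p[m - 1]'(by omega) = q[m - 1]'(by omega) :=
                ih (m - 1) (by omega) (by omega) (by omega)
              have e4 : p[m - 1]'(by omega) = p[m + 1] := by rw [e3, e2]
              have := hnodp.getElem_inj_iff.mp e4
              omega
        · exact absurd (hv ▸ List.getElem_mem (l := p) (by omega : m + 1 < p.length)) hvp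
  have hlen : p.length = q.length :=
    le_antisymm (thread_len_le hp hq key)
      (thread_len_le hq hp (fun m hm hm' => (key m hm' hm).symm))
  exact List.ext_getElem hlen key

lemma forest_adj {G : SimpleGraph V} {ℓ : ℕ} {a : ZMod ℓ → V} {x y : V}
    (h : G.Adj x y) (he : s(x, y) ∉ cycEdges a) : (forest G a).Adj x y := by
  rw [forest, SimpleGraph.deleteEdges_adj]
  exact ⟨h, he⟩

lemma exists_tree {G : SimpleGraph V} {ℓ : ℕ} {a : ZMod ℓ → V}
    (hG : UnicyclicSetup G ℓ a) (v : V) : ∃ i, inTree G a i v := by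
  have aux : ∀ {u w : V} (W : G.Walk u w), (∃ i, inTree G a i u) → ∃ i, inTree G a i w := by
    intro u w W
    induction W with
    | nil => exact id
    | @cons u x w h W ih =>
      intro hu
      by_cases he : s(u, x) ∈ cycEdges a
      · obtain ⟨m, hm⟩ := he
        rcases Sym2.eq_iff.mp hm with ⟨-, rfl⟩ | ⟨-, rfl⟩
        · exact ih ⟨m + 1, SimpleGraph.Reachable.refl _⟩
        · exact ih ⟨m, SimpleGraph.Reachable.refl _⟩
      · obtain ⟨i, hi⟩ := hu
        exact ih ⟨i, hi.trans (forest_adj h he).reachable⟩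
  obtain ⟨W⟩ := hG.conn (a 0) v
  exact aux W ⟨0, SimpleGraph.Reachable.refl _⟩

lemma cut_walk {G : SimpleGraph V} {ℓ : ℕ} {a : ZMod ℓ → V}
    (hG : UnicyclicSetup G ℓ a) {i : ZMod ℓ}
    (honly : ∀ j, inTree G a i (a j) → j = i) :
    ∀ {x y : V} (W : G.Walk x y), inTree G a i x → ¬inTree G a i y →
      G.dist x (a i) + G.dist (a i) y ≤ W.length := by
  intro x y W
  induction W with
  | nil => intro hx hy; exact absurd hx hy
  | @cons x z y h W ih =>
    intro hx hy
    by_cases he : s(x, z) ∈ cycEdges a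
    · obtain ⟨m, hm⟩ := he
      have hxa : x = a m ∨ x = a (m + 1) := by
        rcases Sym2.eq_iff.mp hm with ⟨h1, -⟩ | ⟨h1, -⟩
        · exact Or.inl h1
        · exact Or.inr h1
      have hxi : x = a i := by
        rcases hxa with rfl | rfl
        · rw [honly m hx]
        · rw [honly (m + 1) hx]
      subst hxi
      have h1 : G.dist (a i) (a i) = 0 := SimpleGraph.dist_self
      have h2 : G.dist (a i) y ≤ (SimpleGraph.Walk.cons h W).length := SimpleGraph.dist_le _
      simp only [SimpleGraph.Walk.length_cons] at h2 ⊢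
      omega
    · have hz : inTree G a i z := hx.trans (forest_adj h he).reachable
      have h1 := ih hz hy
      have h2 := dist_adj_le hG.conn (z := a i) h
      simp only [SimpleGraph.Walk.length_cons]
      omega

lemma tree_dist {G : SimpleGraph V} {ℓ : ℕ} {a : ZMod ℓ → V}
    (hG : UnicyclicSetup G ℓ a) {i : ZMod ℓ}
    (honly : ∀ j, inTree G a i (a j) → j = i) {x y : V}
    (hx : inTree G a i x) (hy : ¬inTree G a i y) :
    G.dist x y = G.dist x (a i) + G.dist (a i) y := by
  apply le_antisymm
  · exact hG.conn.dist_triangle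
  · obtain ⟨W, hW⟩ := (hG.conn x y).exists_walk_length_eq_dist
    have := cut_walk hG honly W hx hy
    omega

lemma main_lemma {G : SimpleGraph V} [DecidableRel G.Adj] {ℓ : ℕ} {a : ZMod ℓ → V}
    (hG : UnicyclicSetup G ℓ a) (S : Set V)
    (hres : ∀ v v₁ u₁ : V, G.Adj v v₁ → G.Adj v u₁ → v₁ ≠ u₁ →
      (∀ w ∈ S, G.dist w v₁ = G.dist w v + 1) →
      (∀ w ∈ S, G.dist w u₁ = G.dist w v + 1) → False) :
    BranchResolving G S ∧ 2 ≤ (activeSet G a S).ncard := by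
  have h2ne : (2 : ZMod ℓ) ≠ 0 := by
    intro h
    rw [show ((2 : ZMod ℓ)) = ((2 : ℕ) : ZMod ℓ) by push_cast; ring,
      ZMod.natCast_eq_zero_iff] at h
    have h1 := Nat.le_of_dvd (by norm_num) h
    have := hG.three_le
    omega
  have h1ne : (1 : ZMod ℓ) ≠ 0 := by
    intro h
    rw [show ((1 : ZMod ℓ)) = ((1 : ℕ) : ZMod ℓ) by push_cast; ring,
      ZMod.natCast_eq_zero_iff] at h
    have h1 := Nat.le_of_dvd (by norm_num) h
    have := hG.three_le
    omega
  constructor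
  · -- BranchResolving
    intro v hdeg
    by_cases hfin : (threads G v).Finite
    · set T' : Set (List V) := {p ∈ threads G v | ∃ x ∈ S, x ∈ p} with hT'
      have hsub : T' ⊆ threads G v := fun p hp => hp.1
      have hss : (threads G v \ T').Subsingleton := by
        rintro p ⟨hp, hpS⟩ q ⟨hq, hqS⟩
        by_contra hne
        refine hres v (p.head hp.2.1) (q.head hq.2.1) (thread_head_adj hp) (thread_head_adj hq)
          (fun e => hne (thread_head_det hp hq e)) ?_ ?_
        · intro w hw
          exact thread_dist hG.conn hp (fun hmem => hpS ⟨hp, w, hw, hmem⟩)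
        · intro w hw
          exact thread_dist hG.conn hq (fun hmem => hqS ⟨hq, w, hw, hmem⟩)
      have h1 : (threads G v).ncard ≤ T'.ncard + (threads G v \ T').ncard := by
        conv_lhs => rw [← Set.union_diff_cancel hsub]
        exact Set.ncard_union_le _ _
      have hdiff : (threads G v \ T').ncard ≤ 1 :=
        (Set.ncard_le_one hfin.diff).mpr (fun a ha b hb => hss ha hb)
      simp only [numThreads]
      omega
    · have h0 : numThreads G v = 0 := Set.Infinite.ncard (fun h => hfin h)
      simp [h0]
  · -- 2 ≤ ncard of active set
    by_contra hlt
    push_neg at hlt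
    have hone : ∀ i j : ZMod ℓ, sActive G a S i → sActive G a S j → i = j := by
      intro i j hi hj
      by_contra hij
      have hne : a i ≠ a j := fun e => hij (hG.inj e)
      have hsub2 : {a i, a j} ⊆ activeSet G a S := by
        rintro x (rfl | rfl)
        · exact ⟨i, rfl, hi⟩
        · exact ⟨j, rfl, hj⟩
      have h2 := Set.ncard_le_ncard hsub2 (Set.toFinite _)
      rw [Set.ncard_pair hne] at h2
      omega
    rcases Set.eq_empty_or_nonempty S with rfl | ⟨x, hx⟩
    · refine hres (a 0) (a 1) (a (-1)) ?_ ?_ ?_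
        (fun w hw => absurd hw (Set.notMem_empty w))
        (fun w hw => absurd hw (Set.notMem_empty w))
      · have := hG.adj 0; simpa using this
      · have := hG.adj (-1); simpa using this.symm
      · intro e
        have h3 : (1 : ZMod ℓ) = -1 := hG.inj e
        exact h2ne (by linear_combination h3)
    · obtain ⟨i, hi⟩ := exists_tree hG x
      have hact : sActive G a S i := ⟨x, hx, hi⟩
      have honly : ∀ j, inTree G a i (a j) → j = i := fun j hj =>
        hone j i ⟨x, hx, hj.symm.trans hi⟩ hact
      have hd : ∀ k : ZMod ℓ, k ≠ i →
          ∀ w ∈ S, G.dist w (a k) = G.dist w (a i) + G.dist (a i) (a k) := by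
        intro k hk w hw
        obtain ⟨j, hj⟩ := exists_tree hG w
        have hji : j = i := hone j i ⟨w, hw, hj⟩ hact
        subst hji
        exact tree_dist hG honly hj (fun hm => hk (honly k hm))
      have hadj1 : G.Adj (a i) (a (i + 1)) := hG.adj i
      have hadj2 : G.Adj (a i) (a (i - 1)) := by
        have := hG.adj (i - 1); simpa using this.symm
      refine hres (a i) (a (i + 1)) (a (i - 1)) hadj1 hadj2 ?_ ?_ ?_
      · intro e
        have h3 : i + 1 = i - 1 := hG.inj e
        exact h2ne (by linear_combination h3)
      · intro w hw
        rw [hd (i + 1) (fun e => h1ne (by linear_combination e)) w hw,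
          SimpleGraph.dist_eq_one_iff_adj.mpr hadj1]
      · intro w hw
        rw [hd (i - 1) (fun e => h1ne (by linear_combination -e)) w hw,
          SimpleGraph.dist_eq_one_iff_adj.mpr hadj2]

theorem stmt0' (G : SimpleGraph V) [DecidableRel G.Adj] {ℓ : ℕ} {a : ZMod ℓ → V}
    (hG : UnicyclicSetup G ℓ a) (S : Set V) :
    (MetricGen G S → BranchResolving G S ∧ 2 ≤ (activeSet G a S).ncard) ∧
    (EdgeMetricGen G S → BranchResolving G S ∧ 2 ≤ (activeSet G a S).ncard) := by
  constructor
  · intro hM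
    apply main_lemma hG S
    intro v v₁ u₁ h1 h2 hne hd1 hd2
    obtain ⟨w, hw, hne'⟩ := hM v₁ u₁ hne
    exact hne' (by rw [hd1 w hw, hd2 w hw])
  · intro hE
    apply main_lemma hG S
    intro v v₁ u₁ h1 h2 hne hd1 hd2
    have hee : s(v, v₁) ≠ s(v, u₁) := by
      intro e
      rcases Sym2.eq_iff.mp e with ⟨-, e2⟩ | ⟨e1, -⟩
      · exact hne e2
      · exact h2.ne e1
    obtain ⟨w, hw, hne'⟩ := hE _ (G.mem_edgeSet.mpr h1) _
      (G.mem_edgeSet.mpr h2) hee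
    apply hne'
    simp only [edist, Sym2.lift_mk]
    rw [hd1 w hw, hd2 w hw]

end Paper

namespace Paper

variable {V : Type} [Fintype V] [DecidableEq V]

theorem stmt0 (G : SimpleGraph V) [DecidableRel G.Adj] {ℓ : ℕ} {a : ZMod ℓ → V}
    (hG : UnicyclicSetup G ℓ a) (S : Set V) :
    (MetricGen G S → BranchResolving G S ∧ 2 ≤ (activeSet G a S).ncard) ∧
    (EdgeMetricGen G S → BranchResolving G S ∧ 2 ≤ (activeSet G a S).ncard) := by
  exact stmt0' G hG S

end Paper
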